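/- arXiv:1702.05524 — 3 statements merged into one kernel-verified Lean document; each statement's English description precedes it below -/
import Mathlib

section
/- Let f(x) = \sum_{n=0}^\infty a_n x^n and g(x) = \sum_{n=0}^\infty b_n x^n be two real power series, where a_n \in \mathbb{R} and b_n > 0 for all n, and suppose both series converge for |x| < r. If the sequence {a_n/b_n}_{n\ge 0} is increasing (respectively, decreasing), then the function x \mapsto f(x)/g(x) is increasing (respectively, decreasing) on (0, r). -/
set_option maxHeartbeats 1000000

private lemma sym_nonpos {c : ℕ × ℕ → ℝ} {S : ℝ} (h : HasSum c S)
    (hpt : ∀ p : ℕ × ℕ, c p + c p.swap ≤ 0) : S ≤ 0 := by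
  have hswap : HasSum (fun p : ℕ × ℕ => c p.swap) S :=
    ((Equiv.prodComm ℕ ℕ).hasSum_iff).mpr h
  have hsum : HasSum (fun p : ℕ × ℕ => c p + c p.swap) (S + S) := h.add hswap
  have : S + S ≤ 0 := hasSum_le (g := fun _ => (0:ℝ)) hpt hsum hasSum_zero
  linarith

private lemma bk_aux
    (r : ℝ) (hr : 0 < r) (a b : ℕ → ℝ) (hb : ∀ n, 0 < b n)
    (f g : ℝ → ℝ)
    (hf : ∀ x : ℝ, |x| < r → HasSum (fun n => a n * x ^ n) (f x))
    (hg : ∀ x : ℝ, |x| < r → HasSum (fun n => b n * x ^ n) (g x))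
    (hab : Monotone (fun n => a n / b n)) :
    MonotoneOn (fun x => f x / g x) (Set.Ioo 0 r) := by
  -- positivity of g on (0, r)
  have hgpos : ∀ x ∈ Set.Ioo (0:ℝ) r, 0 < g x := by
    intro x hx
    obtain ⟨hx0, hxr⟩ := hx
    have habs : |x| < r := by rw [abs_of_pos hx0]; exact hxr
    have hG := hg x habs
    have h0 : b 0 * x ^ 0 ≤ g x :=
      le_hasSum hG 0 (fun j _ => mul_nonneg (hb j).le (pow_nonneg hx0.le j))
    simpa using lt_of_lt_of_le (by simpa using hb 0) h0
  intro x hx y hy hxy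
  obtain ⟨hx0, hxr⟩ := hx
  obtain ⟨hy0, hyr⟩ := hy
  have hxabs : |x| < r := by rw [abs_of_pos hx0]; exact hxr
  have hyabs : |y| < r := by rw [abs_of_pos hy0]; exact hyr
  have hfx := hf x hxabs
  have hfy := hf y hyabs
  have hgx := hg x hxabs
  have hgy := hg y hyabs
  -- summability (absolute, since ℝ is finite dimensional)
  have sum2 : ∀ (u v : ℕ → ℝ) (s t : ℝ) (z w : ℝ),
      HasSum (fun n => u n * z ^ n) s → HasSum (fun n => v n * w ^ n) t →
      HasSum (fun p : ℕ × ℕ => (u p.1 * z ^ p.1) * (v p.2 * w ^ p.2)) (s * t) := by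
    intro u v s t z w h1 h2
    have h1n : Summable fun n => ‖u n * z ^ n‖ := summable_norm_iff.mpr h1.summable
    have h2n : Summable fun n => ‖v n * w ^ n‖ := summable_norm_iff.mpr h2.summable
    exact h1.mul h2 (summable_mul_of_summable_norm h1n h2n)
  have hS1 : HasSum (fun p : ℕ × ℕ => (a p.1 * x ^ p.1) * (b p.2 * y ^ p.2))
      (f x * g y) := sum2 a b _ _ x y hfx hgy
  have hS2 : HasSum (fun p : ℕ × ℕ => (a p.1 * y ^ p.1) * (b p.2 * x ^ p.2))
      (f y * g x) := sum2 a b _ _ y x hfy hgx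
  have hSc : HasSum (fun p : ℕ × ℕ =>
      (a p.1 * x ^ p.1) * (b p.2 * y ^ p.2) - (a p.1 * y ^ p.1) * (b p.2 * x ^ p.2))
      (f x * g y - f y * g x) := hS1.sub hS2
  -- pointwise nonpositivity
  have hpt : ∀ p : ℕ × ℕ,
      ((a p.1 * x ^ p.1) * (b p.2 * y ^ p.2) - (a p.1 * y ^ p.1) * (b p.2 * x ^ p.2)) +
      ((a p.swap.1 * x ^ p.swap.1) * (b p.swap.2 * y ^ p.swap.2) -
        (a p.swap.1 * y ^ p.swap.1) * (b p.swap.2 * x ^ p.swap.2)) ≤ 0 := by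
    rintro ⟨n, m⟩
    simp only [Prod.swap, Prod.fst, Prod.snd]
    have pow_ineq : ∀ n m : ℕ, n ≤ m → x ^ m * y ^ n ≤ x ^ n * y ^ m := by
      intro n m hnm
      obtain ⟨k, rfl⟩ := Nat.exists_eq_add_of_le hnm
      have hk : x ^ k ≤ y ^ k := pow_le_pow_left₀ hx0.le hxy k
      rw [pow_add, pow_add]
      nlinarith [mul_nonneg (mul_nonneg (pow_nonneg hx0.le n) (pow_nonneg hy0.le n))
        (sub_nonneg.mpr hk)]
    have coef : ∀ n m : ℕ, n ≤ m → a n * b m ≤ a m * b n := by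
      intro n m hnm
      have := hab hnm
      rwa [div_le_div_iff₀ (hb n) (hb m)] at this
    rcases le_total n m with h | h
    · nlinarith [mul_nonpos_of_nonpos_of_nonneg
        (by linarith [coef n m h] : a n * b m - a m * b n ≤ 0)
        (by linarith [pow_ineq n m h] : (0:ℝ) ≤ x ^ n * y ^ m - x ^ m * y ^ n)]
    · nlinarith [mul_nonpos_of_nonneg_of_nonpos
        (by linarith [coef m n h] : (0:ℝ) ≤ a n * b m - a m * b n)
        (by linarith [pow_ineq m n h] : x ^ n * y ^ m - x ^ m * y ^ n ≤ 0)]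
  have hkey : f x * g y ≤ f y * g x := by
    have := sym_nonpos hSc hpt
    linarith
  have hgx' := hgpos x ⟨hx0, hxr⟩
  have hgy' := hgpos y ⟨hy0, hyr⟩
  simp only
  rw [div_le_div_iff₀ hgx' hgy']
  exact hkey

/-- Biernacki–Krzyż lemma on ratios of power series. -/
theorem ratio_of_power_series_monotone
    (r : ℝ) (hr : 0 < r) (a b : ℕ → ℝ) (hb : ∀ n, 0 < b n)
    (f g : ℝ → ℝ)
    (hf : ∀ x : ℝ, |x| < r → HasSum (fun n => a n * x ^ n) (f x))
    (hg : ∀ x : ℝ, |x| < r → HasSum (fun n => b n * x ^ n) (g x)) :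
    (Monotone (fun n => a n / b n) →
      MonotoneOn (fun x => f x / g x) (Set.Ioo 0 r)) ∧
    (Antitone (fun n => a n / b n) →
      AntitoneOn (fun x => f x / g x) (Set.Ioo 0 r)) := by
  constructor
  · exact fun hab => bk_aux r hr a b hb f g hf hg hab
  · intro hab
    have hf' : ∀ x : ℝ, |x| < r → HasSum (fun n => (-a n) * x ^ n) (-f x) := by
      intro x hx
      simpa [neg_mul] using (hf x hx).neg
    have hab' : Monotone (fun n => (-a n) / b n) := by
      intro n m hnm
      have := hab hnm
      simp only [neg_div]
      linarith
    have hmono := bk_aux r hr (fun n => -a n) b hb (fun x => -f x) g hf' hg hab'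
    intro x hx y hy hxy
    have := hmono hx hy hxy
    simp only [neg_div] at this
    linarith
end

section
/- Let k > 0, \lambda > 0, and \mu \ge \nu > -1. Then the function f(t) = \Gamma_k(\lambda t + \mu + 1) / \Gamma_k(\lambda t + \nu + 1) is increasing on [0, \infty). -/
lemma convex_diff_le {g : ℝ → ℝ} (hg : ConvexOn ℝ (Set.Ioi 0) g) {b b' c : ℝ}
    (hb : 0 < b) (hbb : b ≤ b') (hc : 0 ≤ c) :
    g (b + c) - g b ≤ g (b' + c) - g b' := by
  rcases eq_or_lt_of_le hc with rfl | hc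
  · simp
  rcases eq_or_lt_of_le hbb with rfl | hbb
  · simp
  have hb' : (0:ℝ) < b' := lt_trans hb hbb
  have h1 : (g (b + c) - g b) / (b + c - b) ≤ (g (b' + c) - g b) / (b' + c - b) :=
    hg.secant_mono (Set.mem_Ioi.2 hb) (by simp [Set.mem_Ioi]; linarith)
      (by simp [Set.mem_Ioi]; linarith) (by linarith) (by linarith) (by linarith)
  have h2 : (g b - g (b' + c)) / (b - (b' + c)) ≤ (g b' - g (b' + c)) / (b' - (b' + c)) :=
    hg.secant_mono (by simp [Set.mem_Ioi]; linarith) (Set.mem_Ioi.2 hb)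
      (Set.mem_Ioi.2 hb') (by linarith) (by linarith) hbb.le
  have e1 : (g b - g (b' + c)) / (b - (b' + c)) = (g (b' + c) - g b) / (b' + c - b) := by
    rw [← neg_div_neg_eq]; congr 1 <;> ring
  have e2 : (g b' - g (b' + c)) / (b' - (b' + c)) = (g (b' + c) - g b') / c := by
    rw [← neg_div_neg_eq]; congr 1 <;> ring
  have h2' : (g (b' + c) - g b) / (b' + c - b) ≤ (g (b' + c) - g b') / c := by
    rw [e1, e2] at h2; exact h2
  have h3 : (g (b + c) - g b) / c ≤ (g (b' + c) - g b') / c := by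
    calc (g (b + c) - g b) / c = (g (b + c) - g b) / (b + c - b) := by ring_nf
      _ ≤ (g (b' + c) - g b) / (b' + c - b) := h1
      _ ≤ (g (b' + c) - g b') / c := h2'
  have := (div_le_div_iff_of_pos_right hc).1 h3
  linarith

theorem kGamma_ratio_monotone' (k lam μ ν : ℝ) (hk : 0 < k) (hlam : 0 < lam) (hν : -1 < ν) (hμν : ν ≤ μ) :
    MonotoneOn (fun t => (k ^ ((lam * t + μ + 1) / k - 1) * Real.Gamma ((lam * t + μ + 1) / k)) / (k ^ ((lam * t + ν + 1) / k - 1) * Real.Gamma ((lam * t + ν + 1) / k)))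
      (Set.Ici 0) := by
  intro t ht t' ht' htt
  simp only
  set B := (lam * t + ν + 1) / k with hB
  set B' := (lam * t' + ν + 1) / k with hB'
  set c := (μ - ν) / k with hcdef
  have hBpos : 0 < B := by
    apply div_pos _ hk
    have : 0 ≤ lam * t := mul_nonneg hlam.le ht
    linarith
  have hB'pos : 0 < B' := by
    apply div_pos _ hk
    have : 0 ≤ lam * t' := mul_nonneg hlam.le (le_trans ht htt)
    linarith
  have hBB : B ≤ B' := by
    rw [hB, hB']; gcongr
  have hc : 0 ≤ c := div_nonneg (by linarith) hk.le
  have hX : (lam * t + μ + 1) / k = B + c := by rw [hB, hcdef]; ring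
  have hX' : (lam * t' + μ + 1) / k = B' + c := by rw [hB', hcdef]; ring
  have hlog : Real.log (Real.Gamma (B + c)) - Real.log (Real.Gamma B)
      ≤ Real.log (Real.Gamma (B' + c)) - Real.log (Real.Gamma B') :=
    convex_diff_le Real.convexOn_log_Gamma hBpos hBB hc
  have gBc := Real.Gamma_pos_of_pos (by linarith : (0:ℝ) < B + c)
  have gB := Real.Gamma_pos_of_pos hBpos
  have gB'c := Real.Gamma_pos_of_pos (by linarith : (0:ℝ) < B' + c)
  have gB' := Real.Gamma_pos_of_pos hB'pos
  have hratio : Real.Gamma (B + c) / Real.Gamma B ≤ Real.Gamma (B' + c) / Real.Gamma B' := by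
    rw [div_le_div_iff₀ gB gB']
    have : Real.log (Real.Gamma (B + c) * Real.Gamma B') ≤ Real.log (Real.Gamma (B' + c) * Real.Gamma B) := by
      rw [Real.log_mul (ne_of_gt gBc) (ne_of_gt gB'), Real.log_mul (ne_of_gt gB'c) (ne_of_gt gB)]
      linarith
    exact (Real.log_le_log_iff (by positivity) (by positivity)).1 this
  rw [hX, hX']
  have hkpow : ∀ x : ℝ, (0:ℝ) < k ^ (x : ℝ) := fun x => Real.rpow_pos_of_pos hk x
  rw [div_le_div_iff₀ (by positivity) (by positivity)]
  have hexp : (B + c - 1) + (B' - 1) = (B' + c - 1) + (B - 1) := by ring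
  have hpoweq : k ^ (B + c - 1) * k ^ (B' - 1) = k ^ (B' + c - 1) * k ^ (B - 1) := by
    rw [← Real.rpow_add hk, ← Real.rpow_add hk, hexp]
  have hmul : Real.Gamma (B + c) * Real.Gamma B' ≤ Real.Gamma (B' + c) * Real.Gamma B := by
    rw [div_le_div_iff₀ gB gB'] at hratio; linarith
  calc k ^ (B + c - 1) * Real.Gamma (B + c) * (k ^ (B' - 1) * Real.Gamma B')
      = (k ^ (B + c - 1) * k ^ (B' - 1)) * (Real.Gamma (B + c) * Real.Gamma B') := by ring
    _ ≤ (k ^ (B + c - 1) * k ^ (B' - 1)) * (Real.Gamma (B' + c) * Real.Gamma B) := by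
        apply mul_le_mul_of_nonneg_left hmul; positivity
    _ = k ^ (B' + c - 1) * Real.Gamma (B' + c) * (k ^ (B - 1) * Real.Gamma B) := by
        rw [hpoweq]; ring



/-- The k-gamma function `Γ_k(x) = k^(x/k - 1) Γ(x/k)`. -/
noncomputable def kGamma (k x : ℝ) : ℝ := k ^ (x / k - 1) * Real.Gamma (x / k)

/-- The k-Pochhammer symbol `(x)_{n,k} = ∏_{j=0}^{n-1} (x + j k)`. -/
noncomputable def kPoch (x k : ℝ) (n : ℕ) : ℝ := ∏ j ∈ Finset.range n, (x + (j : ℝ) * k)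

/-- The modified k-Bessel function of the first kind. -/
noncomputable def kBesselI (k ν γ lam x : ℝ) : ℝ :=
  ∑' n : ℕ, kPoch γ k n / (kGamma k (lam * n + ν + 1) * ((n.factorial : ℝ)) ^ 2) * (x / 2) ^ n

/-- The k-confluent hypergeometric function `Φ_k(a; c; x)`. -/
noncomputable def kPhi (k a c x : ℝ) : ℝ :=
  ∑' n : ℕ, kPoch a k n / (kPoch c k n * (n.factorial : ℝ)) * x ^ n

/-- The k-digamma function `Ψ_k`. -/
noncomputable def kPsi (k t : ℝ) : ℝ :=
  (Real.log k - Real.eulerMascheroniConstant) / k - 1 / t +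
    ∑' n : ℕ, t / (((n : ℝ) + 1) * k * (((n : ℝ) + 1) * k + t))

/-- `t ↦ Γ_k(λt+μ+1)/Γ_k(λt+ν+1)` is increasing on [0,∞). -/
theorem kGamma_ratio_monotone
    (k lam μ ν : ℝ) (hk : 0 < k) (hlam : 0 < lam) (hν : -1 < ν) (hμν : ν ≤ μ) :
    MonotoneOn (fun t => kGamma k (lam * t + μ + 1) / kGamma k (lam * t + ν + 1))
      (Set.Ici 0) := by
  simpa only [kGamma] using kGamma_ratio_monotone' k lam μ ν hk hlam hν hμν
end

section
/- Let k > 0, \lambda > 0, \gamma > 0 be fixed and n \ge 0 an integer. Then the function \nu \mapsto \frac{(\gamma)_{n,k}\,\Gamma_k(\nu+1)}{\Gamma_k(\lambda n + \nu + 1)} is log-convex on (-1, \infty), i.e., \nu \mapsto \log\Big(\frac{(\gamma)_{n,k}\,\Gamma_k(\nu+1)}{\Gamma_k(\lambda n + \nu + 1)}\Big) is convex on (-1, \infty). -/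
/-!
Since `Γ_k(x) = k^(x/k-1) Γ(x/k)`, the logarithm of the coefficient is, up to an additive
constant, `log Γ(u) - log Γ(u + a)` with `u = (ν+1)/k` and `a = λn/k ≥ 0`. By Gauss's product
formula this is the pointwise limit of `∑_{j ≤ m} (log (u + a + j) - log (u + j)) - a log m`, and
each summand is convex in `u` because its second derivative is `(u + j)⁻² - (u + a + j)⁻² ≥ 0`.
Pointwise limits of convex functions are convex.
-/

open Real Filter Set Topology

section

variable {𝕜 α β ι : Type*} [Semiring 𝕜] [PartialOrder 𝕜] [AddCommMonoid α] [SMul 𝕜 α]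
  [AddCommMonoid β] [PartialOrder β] [TopologicalSpace β] [OrderClosedTopology β]
  [SMul 𝕜 β] [ContinuousConstSMul 𝕜 β] [ContinuousAdd β]

theorem ConvexOn.of_tendsto {l : Filter ι} [l.NeBot] {F : ι → α → β} {f : α → β} {s : Set α}
    (hF : ∀ᶠ i in l, ConvexOn 𝕜 s (F i)) (hlim : ∀ x ∈ s, Tendsto (F · x) l (𝓝 (f x))) :
    ConvexOn 𝕜 s f := by
  classical
  -- Extended by zero off `s`, the functions converge in the product topology, where convex
  -- functions form a closed set.
  have hlim' : Tendsto (fun i => s.indicator (F i)) l (𝓝 (s.indicator f)) := by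
    refine tendsto_pi_nhds.2 fun x => ?_
    by_cases hx : x ∈ s
    · simpa [Set.indicator_of_mem hx] using hlim x hx
    · simp [Set.indicator_of_notMem hx]
  have hind : ∀ g : α → β, ConvexOn 𝕜 s (s.indicator g) ↔ ConvexOn 𝕜 s g := fun g =>
    ⟨fun h => h.congr (Set.eqOn_indicator), fun h => h.congr (Set.eqOn_indicator).symm⟩
  exact (hind f).1 <| isClosed_setOfPred_convexOn.mem_of_tendsto hlim' <|
    hF.mono fun i hi => (hind (F i)).2 hi

end

theorem ConvexOn.finset_sum {𝕜 E β ι : Type*} [Semiring 𝕜] [PartialOrder 𝕜] [AddCommMonoid E]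
    [AddCommMonoid β] [PartialOrder β] [IsOrderedAddMonoid β] [SMul 𝕜 E] [Module 𝕜 β]
    {s : Set E} {t : Finset ι} {f : ι → E → β} (hs : Convex 𝕜 s)
    (hf : ∀ i ∈ t, ConvexOn 𝕜 s (f i)) : ConvexOn 𝕜 s (fun x => ∑ i ∈ t, f i x) := by
  classical
  induction t using Finset.induction_on with
  | empty => simpa using convexOn_const (0 : β) hs
  | insert i t hit ih =>
    simp only [Finset.sum_insert hit]
    exact (hf i (Finset.mem_insert_self i t)).add
      (ih fun j hj => hf j (Finset.mem_insert_of_mem hj))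

theorem convexOn_log_add_sub_log_add {c d : ℝ} (hdc : d ≤ c) :
    ConvexOn ℝ (Ioi (-d)) (fun x => log (x + c) - log (x + d)) := by
  have hpos : ∀ x ∈ interior (Ioi (-d)), 0 < x + d ∧ 0 < x + c := fun x hx => by
    rw [interior_Ioi, mem_Ioi] at hx
    constructor <;> linarith
  refine convexOn_of_hasDerivWithinAt2_nonneg (convex_Ioi _)
    (f' := fun x => (x + c)⁻¹ - (x + d)⁻¹) (f'' := fun x => ((x + d) ^ 2)⁻¹ - ((x + c) ^ 2)⁻¹)
    ?_ (fun x hx => ?_) (fun x hx => ?_) (fun x hx => ?_)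
  · rw [← interior_Ioi]
    exact fun x hx => (((continuous_add_const c).continuousAt.log (hpos x hx).2.ne').sub
      ((continuous_add_const d).continuousAt.log (hpos x hx).1.ne')).continuousWithinAt
  · obtain ⟨hd, hc⟩ := hpos x hx
    simpa using ((((hasDerivAt_id x).add_const c).log hc.ne').fun_sub
      (((hasDerivAt_id x).add_const d).log hd.ne')).hasDerivWithinAt
  · obtain ⟨hd, hc⟩ := hpos x hx
    exact ((((hasDerivAt_id' x).add_const c).fun_inv hc.ne').fun_sub
      (((hasDerivAt_id' x).add_const d).fun_inv hd.ne')).hasDerivWithinAt.congr_deriv (by ring)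
  · obtain ⟨hd, hc⟩ := hpos x hx
    rw [sub_nonneg]
    gcongr

theorem Real.BohrMollerup.logGammaSeq_sub_logGammaSeq_add (x a : ℝ) (m : ℕ) :
    logGammaSeq x m - logGammaSeq (x + a) m =
      ∑ j ∈ Finset.range (m + 1), (log (x + (a + j)) - log (x + j)) - a * log m := by
  simp only [logGammaSeq, Finset.sum_sub_distrib, add_assoc]
  ring

open Real.BohrMollerup in
theorem convexOn_log_Gamma_sub_log_Gamma_add {a : ℝ} (ha : 0 ≤ a) :
    ConvexOn ℝ (Ioi 0) (fun x => log (Gamma x) - log (Gamma (x + a))) := by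
  refine ConvexOn.of_tendsto (l := atTop)
    (F := fun m x => logGammaSeq x m - logGammaSeq (x + a) m) (Eventually.of_forall fun m => ?_)
    fun x hx => (tendsto_log_gamma hx).sub (tendsto_log_gamma (add_pos_of_pos_of_nonneg hx ha))
  simp only [logGammaSeq_sub_logGammaSeq_add]
  refine (ConvexOn.finset_sum (convex_Ioi 0) fun j _ => ?_).sub (concaveOn_const _ (convex_Ioi 0))
  exact (convexOn_log_add_sub_log_add (by linarith [j.cast_nonneg (α := ℝ)])).subset
    (Ioi_subset_Ioi (by simp)) (convex_Ioi 0)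

theorem log_kGamma {k x : ℝ} (hk : 0 < k) (hx : 0 < x) :
    log (kGamma k x) = (x / k - 1) * log k + log (Gamma (x / k)) := by
  rw [kGamma, log_mul (rpow_pos_of_pos hk _).ne' (Gamma_pos_of_pos (div_pos hx hk)).ne',
    log_rpow hk]

theorem kGamma_pos {k x : ℝ} (hk : 0 < k) (hx : 0 < x) : 0 < kGamma k x :=
  mul_pos (rpow_pos_of_pos hk _) (Gamma_pos_of_pos (div_pos hx hk))

theorem kPoch_pos {x k : ℝ} (hx : 0 < x) (hk : 0 ≤ k) (n : ℕ) : 0 < kPoch x k n :=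
  Finset.prod_pos fun j _ => by positivity

theorem convexOn_log_kGamma_sub_log_kGamma_add {k b : ℝ} (hk : 0 < k) (hb : 0 ≤ b) :
    ConvexOn ℝ (Ioi 0) (fun x => log (kGamma k x) - log (kGamma k (x + b))) := by
  have hdiv : ConvexOn ℝ (Ioi 0)
      (fun x => log (Gamma (x / k)) - log (Gamma (x / k + b / k))) := by
    have := (convexOn_log_Gamma_sub_log_Gamma_add (div_nonneg hb hk.le)).comp_linearMap
      (LinearMap.mulLeft ℝ k⁻¹)
    have hpre : LinearMap.mulLeft ℝ k⁻¹ ⁻¹' Ioi 0 = Ioi 0 := by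
      ext x
      simp [hk]
    rw [hpre] at this
    refine this.congr fun x _ => ?_
    simp [div_eq_inv_mul]
  refine (hdiv.add (convexOn_const (-(b / k) * log k) (convex_Ioi 0))).congr fun x hx => ?_
  have hx : 0 < x := hx
  simp only [Pi.add_apply, log_kGamma hk hx, log_kGamma hk (add_pos_of_pos_of_nonneg hx hb),
    add_div]
  ring

/-- log-convexity in ν of the coefficient
`(γ)_{n,k} Γ_k(ν+1)/Γ_k(λn+ν+1)`. -/
theorem kBessel_coeff_logConvex
    (k lam γ : ℝ) (n : ℕ) (hk : 0 < k) (hlam : 0 < lam) (hγ : 0 < γ) :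
    ConvexOn ℝ (Set.Ioi (-1 : ℝ))
      (fun ν => Real.log (kPoch γ k n * kGamma k (ν + 1) / kGamma k (lam * n + ν + 1))) := by
  have hpoch := kPoch_pos hγ hk.le n
  have hb : 0 ≤ lam * n := by positivity
  have hshift := (convexOn_log_kGamma_sub_log_kGamma_add hk hb).translate_right 1
  have hpre : (fun z => 1 + z) ⁻¹' Ioi 0 = Ioi (-1 : ℝ) := by
    ext ν
    simp [neg_lt_iff_pos_add']
  rw [hpre] at hshift
  refine (hshift.add (convexOn_const (log (kPoch γ k n)) (convex_Ioi _))).congr fun ν hν => ?_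
  have hν : 0 < ν + 1 := neg_lt_iff_pos_add.1 hν
  have hνb : 0 < ν + 1 + lam * n := add_pos_of_pos_of_nonneg hν hb
  simp only [Function.comp_apply, Pi.add_apply]
  rw [add_comm 1 ν, show lam * n + ν + 1 = ν + 1 + lam * n by ring,
    log_div (mul_pos hpoch (kGamma_pos hk hν)).ne' (kGamma_pos hk hνb).ne',
    log_mul hpoch.ne' (kGamma_pos hk hν).ne']
  ring
end
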